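/- Let q ∈ ℂ be nonzero and not a root of unity and let n ≥ 1 be an integer. (a) If λ, c ∈ ℂ with λ ≠ 0 satisfy q²λ − q⁴λ² + c = 0 and q^{2(1−n)}λ − q^{4(1−n)}λ² + c = 0, then λ = q^{n−2}/(qⁿ + q⁻ⁿ) and c = −1/(qⁿ + q⁻ⁿ)². (b) There is no λ ∈ ℂ satisfying both 1 − q⁴λ² = 0 and 1 − q^{4(1−n)}λ² = 0. -/

import Mathlib

/-!
Both equations say that `q²λ` and `q^(2(1-n))λ = q²λ / x²`, with `x = qⁿ`, are roots of
`t ↦ t - t² + c`. As `x² ≠ 1` they are distinct, so by Vieta they sum to `1` and their product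
is `-c`; solving gives `q²λ = x² / (x² + 1)`, whence both formulas. In case (b) the two equations
force `x⁴ = 1`.
-/

theorem add_eq_one_and_eq_neg_mul_of_sub_sq_add_eq_zero {R : Type*} [CommRing R]
    [NoZeroDivisors R] {s t c : R} (hst : s ≠ t) (hs : s - s ^ 2 + c = 0)
    (ht : t - t ^ 2 + c = 0) :
    s + t = 1 ∧ c = -(s * t) := by
  have h : (s - t) * (1 - (s + t)) = 0 := by linear_combination hs - ht
  have hsum : s + t = 1 :=
    (sub_eq_zero.mp ((mul_eq_zero.mp h).resolve_left (sub_ne_zero.mpr hst))).symm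
  exact ⟨hsum, by linear_combination hs + s * hsum⟩

theorem eq_div_add_inv_and_eq_neg_inv_sq_of_roots {K : Type*} [Field K] {a x lam c : K}
    (ha : a ≠ 0) (hx : x ≠ 0) (hx2 : x ^ 2 ≠ 1) (hlam : lam ≠ 0)
    (h₁ : a * lam - (a * lam) ^ 2 + c = 0)
    (h₂ : a / x ^ 2 * lam - (a / x ^ 2 * lam) ^ 2 + c = 0) :
    lam = x / a / (x + x⁻¹) ∧ c = -1 / (x + x⁻¹) ^ 2 := by
  have hne : a * lam ≠ a / x ^ 2 * lam := fun h => hx2 <| by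
    have h := mul_right_cancel₀ hlam h
    field_simp at h
    exact h
  obtain ⟨hsum, hc⟩ := add_eq_one_and_eq_neg_mul_of_sub_sq_add_eq_zero hne h₁ h₂
  have hsum' : a * lam * (x ^ 2 + 1) = x ^ 2 := by
    field_simp at hsum
    linear_combination hsum
  have hD : x ^ 2 + 1 ≠ 0 := by
    rintro hD
    rw [hD, mul_zero] at hsum'
    exact pow_ne_zero 2 hx hsum'.symm
  have hs : a * lam = x ^ 2 / (x ^ 2 + 1) := by rw [eq_div_iff hD, hsum']
  rw [show x + x⁻¹ = (x ^ 2 + 1) / x by field_simp]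
  constructor
  · field_simp
    linear_combination hsum'
  · rw [hc, show a * lam * (a / x ^ 2 * lam) = (a * lam) ^ 2 / x ^ 2 by ring, hs]
    field_simp

theorem zpow_mul_one_sub_natCast {K : Type*} [DivisionRing K] {q : K} (hq : q ≠ 0) (k n : ℕ) :
    q ^ ((k : ℤ) * (1 - n)) = q ^ k / (q ^ n) ^ k := by
  rw [mul_one_sub, zpow_sub₀ hq, ← pow_mul, mul_comm n k]
  norm_cast

theorem stmt10 (q : ℂ) (hq : q ≠ 0) (hq' : ∀ k : ℕ, 0 < k → q ^ k ≠ 1)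
    (n : ℕ) (hn : 1 ≤ n) :
    (∀ lam c : ℂ, lam ≠ 0 →
      q ^ 2 * lam - q ^ 4 * lam ^ 2 + c = 0 →
      q ^ (2 * (1 - (n : ℤ))) * lam - q ^ (4 * (1 - (n : ℤ))) * lam ^ 2 + c = 0 →
      lam = q ^ ((n : ℤ) - 2) / (q ^ (n : ℤ) + q ^ (-(n : ℤ))) ∧
      c = -1 / (q ^ (n : ℤ) + q ^ (-(n : ℤ))) ^ 2) ∧
    ¬ ∃ lam : ℂ,
      1 - q ^ 4 * lam ^ 2 = 0 ∧ 1 - q ^ (4 * (1 - (n : ℤ))) * lam ^ 2 = 0 := by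
  have h2 := zpow_mul_one_sub_natCast hq 2 n
  have h4 := zpow_mul_one_sub_natCast hq 4 n
  push_cast at h2 h4
  have hpow (k : ℕ) (hk : 0 < k) : (q ^ n) ^ k ≠ 1 := by
    rw [← pow_mul]
    exact hq' _ (Nat.mul_pos hn hk)
  refine ⟨fun lam c hlam h₁ h₂ => ?_, fun ⟨lam, h₁, h₂⟩ => ?_⟩
  · rw [zpow_sub₀ hq, zpow_neg, zpow_natCast, zpow_ofNat]
    rw [h2, h4] at h₂
    exact eq_div_add_inv_and_eq_neg_inv_sq_of_roots (pow_ne_zero 2 hq) (pow_ne_zero n hq)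
      (hpow 2 two_pos) hlam (by linear_combination h₁) (by linear_combination h₂)
  · rw [h4] at h₂
    field_simp at h₂
    exact hpow 4 four_pos (by linear_combination h₂ - h₁)
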